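/- Let G be an n×n real matrix, σ ∈ ℝ^n with σ_i ≥ 0, Σ = diag(σ), and let p > 0, β > 0, c > 0 satisfy p·β·c < 1. Suppose Σ·G·σ = c·σ and I − p·β·Σ·G is invertible, and set a := p·(I − p·β·Σ·G)^{-1}·σ and s := Σ_i σ_i. Then the team performance satisfies Y(a) = s·( p/(1 − β·p·c) + β·p²·c / (2·(1 − β·p·c)²) ). -/
import Mathlib


open Matrix

/-- under balanced neighborhood equity with constant `c`, setting
`a := p·(I − p·β·diag(σ)·G)⁻¹·σ` and `s := Σ_i σ_i`, the team performance is
`Y(a) = s·( p/(1 − β·p·c) + β·p²·c/(2·(1 − β·p·c)²) )`. -/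
theorem statement_3 {n : ℕ} (G : Matrix (Fin n) (Fin n) ℝ)
    (σ : Fin n → ℝ) (hσ : ∀ i, 0 ≤ σ i)
    (p β c : ℝ) (hp : 0 < p) (hβ : 0 < β) (hc : 0 < c) (hpc : p * β * c < 1)
    (hbal : (Matrix.diagonal σ * G).mulVec σ = c • σ)
    (hinv : IsUnit ((1 : Matrix (Fin n) (Fin n) ℝ) - (p * β) • (Matrix.diagonal σ * G)))
    (a : Fin n → ℝ)
    (ha : a = p • ((1 : Matrix (Fin n) (Fin n) ℝ)
        - (p * β) • (Matrix.diagonal σ * G))⁻¹.mulVec σ)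
    (s : ℝ) (hs : s = ∑ i, σ i) :
    ∑ i, a i + β / 2 * ∑ i, ∑ j, G i j * a i * a j
      = s * (p / (1 - β * p * c) + β * p ^ 2 * c / (2 * (1 - β * p * c) ^ 2)) := by
  set M : Matrix (Fin n) (Fin n) ℝ := Matrix.diagonal σ * G with hM
  set A : Matrix (Fin n) (Fin n) ℝ := 1 - (p * β) • M with hA
  have hne : (1 - p * β * c) ≠ 0 := by
    have : p * β * c < 1 := hpc
    linarith
  have hAx : A.mulVec ((1 - p * β * c)⁻¹ • σ) = σ := by
    rw [hA, sub_mulVec, one_mulVec, smul_mulVec, mulVec_smul, hbal]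
    ext i
    simp only [Pi.smul_apply, Pi.sub_apply, smul_eq_mul]
    field_simp
  have hinvx : A⁻¹.mulVec σ = (1 - p * β * c)⁻¹ • σ := by
    conv_lhs => rw [← hAx]
    rw [mulVec_mulVec, Matrix.nonsing_inv_mul A ((Matrix.isUnit_iff_isUnit_det A).mp hinv),
      one_mulVec]
  have ha' : a = (p * (1 - p * β * c)⁻¹) • σ := by
    rw [ha, hinvx, smul_smul]
  -- σ quadratic form
  have hquad : ∑ i, σ i * ∑ j, G i j * σ j = c * s := by
    have := congrFun hbal
    have h1 : ∀ i, σ i * ∑ j, G i j * σ j = c * σ i := by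
      intro i
      have h2 := this i
      simp only [hM, Matrix.mulVec, Matrix.mul_apply, dotProduct, Pi.smul_apply,
        smul_eq_mul, Matrix.diagonal_apply] at h2
      calc σ i * ∑ j, G i j * σ j
          = ∑ j, (∑ k, (if i = k then σ i else 0) * G k j) * σ j := by
            rw [Finset.mul_sum]
            congr 1; ext j
            simp [Finset.sum_ite_eq, mul_assoc]
        _ = c * σ i := h2
    simp only [h1, ← Finset.mul_sum, hs]
  set k := p * (1 - p * β * c)⁻¹ with hk
  have hsum1 : ∑ i, a i = k * s := by
    simp [ha', Finset.mul_sum, hs]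
  have hsum2 : ∑ i, ∑ j, G i j * a i * a j = k ^ 2 * (c * s) := by
    rw [← hquad, ha']
    simp only [Pi.smul_apply, smul_eq_mul, Finset.mul_sum]
    refine Finset.sum_congr rfl fun i _ => ?_
    refine Finset.sum_congr rfl fun j _ => ?_
    ring
  rw [hsum1, hsum2, hk]
  have h1 : (1 : ℝ) - β * p * c = 1 - p * β * c := by ring
  rw [h1]
  field_simp
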